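/- arXiv:2603.05467 — 4 statements merged into one kernel-verified Lean document; each statement's English description precedes it below -/
import Mathlib

section
/- With π the stereographic projection of S^d from the north pole, for every real t < 1 and all points a, b ∈ S^d with last coordinates a_{d+1} ≤ t and b_{d+1} ≤ t, one has ‖π(a) - π(b)‖ ≤ ((2-t)/(1-t)²)·dist(a,b). -/
/-!
The projection satisfies `⟪π a, π b⟫ = (⟪a, b⟫ - a_{d+1} b_{d+1}) / ((1 - a_{d+1}) (1 - b_{d+1}))`,
which for unit vectors turns into the classical identity
`‖π a - π b‖² = ‖a - b‖² / ((1 - a_{d+1}) (1 - b_{d+1}))`. Hence `π` is `(1 - t)⁻¹`-Lipschitz for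
the chordal metric on the cap `{x_{d+1} ≤ t}`; since chord length is at most arc length and
`(1 - t)⁻¹ ≤ (2 - t) / (1 - t)²`, the bound follows.
-/

/-- Stereographic projection of `S^d ⊂ ℝ^{d+1}` from the north pole `(0,…,0,1)` onto `ℝ^d`. -/
noncomputable def stereoProj (d : ℕ) (x : EuclideanSpace ℝ (Fin (d + 1))) :
    EuclideanSpace ℝ (Fin d) :=
  WithLp.toLp 2 (fun i => x i.castSucc / (1 - x (Fin.last d)))

open Real InnerProductGeometry

theorem InnerProductGeometry.norm_sub_le_angle {V : Type*} [NormedAddCommGroup V]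
    [InnerProductSpace ℝ V] {x y : V} (hx : ‖x‖ = 1) (hy : ‖y‖ = 1) :
    ‖x - y‖ ≤ angle x y := by
  have hcos : ‖x - y‖ ^ 2 = 2 - 2 * cos (angle x y) := by
    rw [sq, norm_sub_sq_eq_norm_sq_add_norm_sq_sub_two_mul_norm_mul_norm_mul_cos_angle, hx, hy]
    ring
  have hcos_ge := one_sub_sq_div_two_le_cos (x := angle x y)
  exact le_of_sq_le_sq (by linarith) (angle_nonneg x y)

theorem inner_stereoProj (d : ℕ) (a b : EuclideanSpace ℝ (Fin (d + 1))) :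
    inner ℝ (stereoProj d a) (stereoProj d b) =
      (inner ℝ a b - a (Fin.last d) * b (Fin.last d)) /
        ((1 - a (Fin.last d)) * (1 - b (Fin.last d))) := by
  simp only [stereoProj, PiLp.inner_apply, Fin.sum_univ_castSucc, RCLike.inner_apply,
    conj_trivial, mul_comm (b _), add_sub_cancel_right, Finset.sum_div]
  refine Finset.sum_congr rfl fun i _ => ?_
  rw [div_mul_div_comm, mul_comm (b _), mul_comm (1 - b _)]

theorem norm_stereoProj_sub_sq (d : ℕ) {a b : EuclideanSpace ℝ (Fin (d + 1))}
    (ha : ‖a‖ = 1) (hb : ‖b‖ = 1) (ha₁ : a (Fin.last d) ≠ 1) (hb₁ : b (Fin.last d) ≠ 1) :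
    ‖stereoProj d a - stereoProj d b‖ ^ 2 =
      ‖a - b‖ ^ 2 / ((1 - a (Fin.last d)) * (1 - b (Fin.last d))) := by
  have hα : 1 - a (Fin.last d) ≠ 0 := sub_ne_zero.2 ha₁.symm
  have hβ : 1 - b (Fin.last d) ≠ 0 := sub_ne_zero.2 hb₁.symm
  rw [norm_sub_sq_real, norm_sub_sq_real, ← real_inner_self_eq_norm_sq,
    ← real_inner_self_eq_norm_sq (stereoProj d b), inner_stereoProj, inner_stereoProj,
    inner_stereoProj, real_inner_self_eq_norm_sq, real_inner_self_eq_norm_sq, ha, hb]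
  field_simp
  ring

theorem norm_stereoProj_sub_le (d : ℕ) {t : ℝ} (ht : t < 1)
    {a b : EuclideanSpace ℝ (Fin (d + 1))} (ha : ‖a‖ = 1) (hb : ‖b‖ = 1)
    (hat : a (Fin.last d) ≤ t) (hbt : b (Fin.last d) ≤ t) :
    ‖stereoProj d a - stereoProj d b‖ ≤ ‖a - b‖ / (1 - t) := by
  have hsq : (1 - t) ^ 2 ≤ (1 - a (Fin.last d)) * (1 - b (Fin.last d)) := by
    rw [sq]; gcongr
    linarith
  refine le_of_sq_le_sq ?_ (div_nonneg (norm_nonneg _) (by linarith))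
  rw [div_pow, norm_stereoProj_sub_sq d ha hb (by linarith) (by linarith)]
  gcongr

/-- For every `t < 1` and all `a, b ∈ S^d` with last coordinates `≤ t`, one has
`‖π(a) - π(b)‖ ≤ ((2-t)/(1-t)²)·dist(a,b)`, with `dist` the geodesic distance. -/
theorem stereoProj_dist_upper_bound (d : ℕ) (t : ℝ) (ht : t < 1)
    (a b : EuclideanSpace ℝ (Fin (d + 1)))
    (ha : a ∈ Metric.sphere (0 : EuclideanSpace ℝ (Fin (d + 1))) 1)
    (hb : b ∈ Metric.sphere (0 : EuclideanSpace ℝ (Fin (d + 1))) 1)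
    (hat : a (Fin.last d) ≤ t) (hbt : b (Fin.last d) ≤ t) :
    ‖stereoProj d a - stereoProj d b‖ ≤
      ((2 - t) / (1 - t) ^ 2) * InnerProductGeometry.angle a b := by
  rw [mem_sphere_zero_iff_norm] at ha hb
  have h1t : 0 < 1 - t := by linarith
  have hconst : 1 / (1 - t) ≤ (2 - t) / (1 - t) ^ 2 := by
    rw [div_le_div_iff₀ h1t (by positivity)]
    nlinarith
  calc ‖stereoProj d a - stereoProj d b‖ ≤ ‖a - b‖ / (1 - t) :=
        norm_stereoProj_sub_le d ht ha hb hat hbt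
    _ ≤ angle a b / (1 - t) := by gcongr; exact norm_sub_le_angle ha hb
    _ = 1 / (1 - t) * angle a b := by ring
    _ ≤ (2 - t) / (1 - t) ^ 2 * angle a b := by gcongr; exact angle_nonneg a b
end

section
/- Fix d ≥ 2 and k ≥ 1. There exists ℓ = k·2^d such that the following holds. Suppose r > 0 and U, V ⊆ ℝ^d with V finite and |B(u,r) ∩ V| ≤ k for all u ∈ U. Then V can be written as V = V₁ ∪ ... ∪ V_ℓ where each V_i is contained in a single (closed) orthant of ℝ^d and |B(u, r/4) ∩ V_i| ≤ 1 for every u ∈ U and every 1 ≤ i ≤ ℓ. -/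
/-!
Colour greedily the points of `V` lying within `r/4` of `U`: each such point has at most `k`
points of `V` within `r/2` (they all lie in `B(u, r)` for a nearby `u ∈ U`), so `k` colours
suffice to make every colour class `r/2`-separated. A ball of radius `r/4` meets an
`r/2`-separated set at most once. Refining each colour class by the sign pattern of the
coordinates gives `k · 2^d` pieces, each in a closed orthant.
-/

open Metric Set

theorem SimpleGraph.exists_coloring_on_finset_of_card_adj_lt {V : Type*} (G : SimpleGraph V)
    [DecidableRel G.Adj] {k : ℕ} (hk : 0 < k) (s : Finset V)
    (h : ∀ x ∈ s, (s.filter (G.Adj x)).card < k) :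
    ∃ c : V → Fin k, ∀ x ∈ s, ∀ y ∈ s, G.Adj x y → c x ≠ c y := by
  classical
  induction s using Finset.induction_on with
  | empty => exact ⟨fun _ => ⟨0, hk⟩, by simp⟩
  | insert a s ha ih =>
    obtain ⟨c, hc⟩ := ih fun x hx => (Finset.card_le_card
      (Finset.filter_subset_filter _ (Finset.subset_insert a s))).trans_lt
      (h x (Finset.mem_insert_of_mem hx))
    have hused : ((s.filter (G.Adj a)).image c).card < (Finset.univ : Finset (Fin k)).card :=
      calc _ ≤ (s.filter (G.Adj a)).card := Finset.card_image_le
        _ ≤ ((insert a s).filter (G.Adj a)).card :=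
          Finset.card_le_card (Finset.filter_subset_filter _ (Finset.subset_insert a s))
        _ < k := h a (Finset.mem_insert_self a s)
        _ = _ := (Finset.card_fin k).symm
    obtain ⟨col, -, hcol⟩ := Finset.exists_mem_notMem_of_card_lt_card hused
    have hnew : ∀ y ∈ s, G.Adj a y → col ≠ c y := fun y hy hay hcy =>
      hcol (Finset.mem_image.2 ⟨y, Finset.mem_filter.2 ⟨hy, hay⟩, hcy.symm⟩)
    have hne : ∀ y ∈ s, y ≠ a := fun y hy hya => ha (hya ▸ hy)
    refine ⟨Function.update c a col, fun x hx y hy hxy => ?_⟩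
    rcases Finset.mem_insert.1 hx with rfl | hxs <;> rcases Finset.mem_insert.1 hy with rfl | hys
    · exact (G.irrefl hxy).elim
    · simpa [Function.update_of_ne (hne y hys)] using hnew y hys hxy
    · simpa [Function.update_of_ne (hne x hxs)] using (hnew x hxs hxy.symm).symm
    · simpa [Function.update_of_ne (hne x hxs), Function.update_of_ne (hne y hys)] using
        hc x hxs y hys hxy

theorem exists_coloring_pairwise_le_dist {E : Type*} [PseudoMetricSpace E] {k : ℕ} (hk : 0 < k)
    {ρ : ℝ} (hρ : 0 < ρ) {S : Set E} (hS : S.Finite)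
    (h : ∀ x ∈ S, (ball x ρ ∩ S).ncard ≤ k) :
    ∃ c : E → Fin k, ∀ i, (S ∩ c ⁻¹' {i}).Pairwise fun x y => ρ ≤ dist x y := by
  classical
  let G := SimpleGraph.fromRel fun x y : E => dist x y < ρ
  have hdeg : ∀ x ∈ hS.toFinset, (hS.toFinset.filter (G.Adj x)).card < k := by
    intro x hx
    set N := hS.toFinset.filter (G.Adj x)
    have hxS : x ∈ S := hS.mem_toFinset.1 hx
    have hsub : ((insert x N : Finset E) : Set E) ⊆ ball x ρ ∩ S := by
      intro y hy
      rcases Finset.mem_insert.1 hy with rfl | hy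
      · exact ⟨mem_ball_self hρ, hxS⟩
      · obtain ⟨hyS, -, hxy | hyx⟩ := Finset.mem_filter.1 hy
        · exact ⟨mem_ball'.2 hxy, hS.mem_toFinset.1 hyS⟩
        · exact ⟨mem_ball.2 hyx, hS.mem_toFinset.1 hyS⟩
    have hx_notMem : x ∉ N := fun hmem => G.irrefl (Finset.mem_filter.1 hmem).2
    calc N.card < (insert x N).card := by
          rw [Finset.card_insert_of_notMem hx_notMem]; exact Nat.lt_succ_self _
      _ = ((insert x N : Finset E) : Set E).ncard := (ncard_coe_finset _).symm
      _ ≤ (ball x ρ ∩ S).ncard := ncard_le_ncard hsub (hS.inter_of_right _)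
      _ ≤ k := h x hxS
  obtain ⟨c, hc⟩ := G.exists_coloring_on_finset_of_card_adj_lt hk hS.toFinset hdeg
  refine ⟨c, fun i x ⟨hxS, hxi⟩ y ⟨hyS, hyi⟩ hxy => le_of_not_gt fun hlt => ?_⟩
  exact hc x (hS.mem_toFinset.2 hxS) y (hS.mem_toFinset.2 hyS)
    ((SimpleGraph.fromRel_adj _ _ _).2 ⟨hxy, Or.inl hlt⟩) (hxi.trans hyi.symm)

theorem subsingleton_ball_inter_of_pairwise_le_dist {E : Type*} [PseudoMetricSpace E]
    {s : Set E} {δ : ℝ} (hs : s.Pairwise fun x y => 2 * δ ≤ dist x y) (u : E) :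
    (ball u δ ∩ s).Subsingleton := by
  intro x ⟨hxu, hxs⟩ y ⟨hyu, hys⟩
  by_contra hxy
  have := hs hxs hys hxy
  linarith [dist_triangle_right x y u, mem_ball.1 hxu, mem_ball.1 hyu]

theorem ncard_ball_inter_le_of_mem_thickening {E : Type*} [PseudoMetricSpace E]
    {U V : Set E} (hV : V.Finite) {r : ℝ} {k : ℕ}
    (hUV : ∀ u ∈ U, (ball u r ∩ V).ncard ≤ k)
    {δ ε : ℝ} (hδε : δ + ε ≤ r) {x : E} (hx : x ∈ thickening ε U) :
    (ball x δ ∩ V).ncard ≤ k := by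
  obtain ⟨u, hu, hxu⟩ := mem_thickening_iff.1 hx
  have hball : ball x δ ⊆ ball u r := ball_subset_ball' (by linarith)
  exact (ncard_le_ncard (inter_subset_inter_left V hball) (hV.inter_of_right _)).trans
    (hUV u hu)

theorem exists_sign_of_decide_nonneg_eq {ι : Type*} (b : ι → Bool) :
    ∃ σ : ι → ℝ, (∀ j, σ j = 1 ∨ σ j = -1) ∧
      ∀ x : ι → ℝ, (fun j => decide (0 ≤ x j)) = b → ∀ j, 0 ≤ x j * σ j := by
  refine ⟨fun j => if b j then 1 else -1, fun j => by by_cases hb : b j <;> simp [hb], ?_⟩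
  rintro x rfl j
  by_cases hx : 0 ≤ x j
  · simp only [hx, decide_true, if_true, mul_one]
  · simp only [hx, decide_false, Bool.false_eq_true, if_false]; linarith

theorem orthant_decomposition_general (d k : ℕ) (hk : 1 ≤ k)
    (r : ℝ) (hr : 0 < r)
    (U V : Set (EuclideanSpace ℝ (Fin d))) (hVfin : V.Finite)
    (hUV : ∀ u ∈ U, (Metric.ball u r ∩ V).ncard ≤ k) :
    ∃ Vs : Fin (k * 2 ^ d) → Set (EuclideanSpace ℝ (Fin d)),
      V = ⋃ i, Vs i ∧
      (∀ i, ∃ σ : Fin d → ℝ, (∀ j, σ j = 1 ∨ σ j = -1) ∧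
        ∀ x ∈ Vs i, ∀ j, 0 ≤ x j * σ j) ∧
      (∀ i, ∀ u ∈ U, (Metric.ball u (r / 4) ∩ Vs i).ncard ≤ 1) := by
  set S := V ∩ thickening (r / 4) U
  obtain ⟨c, hc⟩ := exists_coloring_pairwise_le_dist (S := S) hk (half_pos hr)
    (hVfin.subset inter_subset_left) fun x hx =>
      (ncard_le_ncard (inter_subset_inter_right _ inter_subset_left)
        (hVfin.inter_of_right _)).trans
        (ncard_ball_inter_le_of_mem_thickening hVfin hUV (by linarith) hx.2)
  let piece : Fin k × (Fin d → Bool) → Set (EuclideanSpace ℝ (Fin d)) :=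
    fun p => {x ∈ V | c x = p.1 ∧ (fun j => decide (0 ≤ x j)) = p.2}
  let e : Fin k × (Fin d → Bool) ≃ Fin (k * 2 ^ d) := Fintype.equivFinOfCardEq (by simp)
  refine ⟨piece ∘ e.symm, ?_, fun i => ?_, fun i u hu => ?_⟩
  · refine Subset.antisymm
      (fun x hx => mem_iUnion.2 ⟨e (c x, fun j => decide (0 ≤ x j)), ?_⟩)
      (iUnion_subset fun i x hx => hx.1)
    simpa [piece] using hx
  · obtain ⟨σ, hσ, horth⟩ := exists_sign_of_decide_nonneg_eq (e.symm i).2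
    exact ⟨σ, hσ, fun x hx => horth x.ofLp hx.2.2⟩
  · rw [Function.comp_apply]
    generalize e.symm i = p
    obtain ⟨col, sgn⟩ := p
    have hsub : ball u (r / 4) ∩ piece (col, sgn) ⊆ ball u (r / 4) ∩ (S ∩ c ⁻¹' {col}) :=
      fun x ⟨hxu, hxV, hxc, _⟩ =>
        ⟨hxu, ⟨hxV, mem_thickening_iff.2 ⟨u, hu, hxu⟩⟩, hxc⟩
    have hsep := (subsingleton_ball_inter_of_pairwise_le_dist (δ := r / 4)
      ((hc col).mono' fun x y hxy => by linarith) u).anti hsub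
    exact (ncard_le_one hsep.finite).2 hsep

/-- Fix `d ≥ 2` and `k ≥ 1`, and set `ℓ = k·2^d`.  Suppose `r > 0` and `U, V ⊆ ℝ^d`
with `V` finite and `|B(u,r) ∩ V| ≤ k` for every `u ∈ U`.  Then `V` can be written as
`V = V₁ ∪ … ∪ V_ℓ` where each `Vᵢ` is contained in a single closed orthant of `ℝ^d`
and `|B(u, r/4) ∩ Vᵢ| ≤ 1` for every `u ∈ U` and every `i`. -/
theorem orthant_decomposition (d k : ℕ) (hd : 2 ≤ d) (hk : 1 ≤ k)
    (r : ℝ) (hr : 0 < r)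
    (U V : Set (EuclideanSpace ℝ (Fin d))) (hVfin : V.Finite)
    (hUV : ∀ u ∈ U, (Metric.ball u r ∩ V).ncard ≤ k) :
    ∃ Vs : Fin (k * 2 ^ d) → Set (EuclideanSpace ℝ (Fin d)),
      V = ⋃ i, Vs i ∧
      (∀ i, ∃ σ : Fin d → ℝ, (∀ j, σ j = 1 ∨ σ j = -1) ∧
        ∀ x ∈ Vs i, ∀ j, 0 ≤ x j * σ j) ∧
      (∀ i, ∀ u ∈ U, (Metric.ball u (r / 4) ∩ Vs i).ncard ≤ 1) :=
  orthant_decomposition_general d k hk r hr U V hVfin hUV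
end

section
/- Suppose 0 < a < 0.01, 0 < r < 0.01/√d, V ⊆ [0,∞)^d is finite, and f : S^{d-1} → (-0.1, 0.1) is odd (f(u) + f(-u) = 0) and a-Lipschitz (|f(u)-f(v)| ≤ a‖u-v‖), with |B((1+f(u))·u, r) ∩ V| ≤ 1 for all u ∈ S^{d-1}. Then there exists g : S^{d-1} → ℝ that is odd, 9a-Lipschitz, and satisfies |f(u) - g(u)| < a·r and B((1+g(u))·u, (a/2)·r) ∩ V = ∅ for all u ∈ S^{d-1}. -/
open scoped RealInnerProductSpace

section PerturbAux

variable {d : ℕ}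

noncomputable def pFun (f : EuclideanSpace ℝ (Fin d) → ℝ) (u : EuclideanSpace ℝ (Fin d)) :
    EuclideanSpace ℝ (Fin d) := (1 + f u) • u

noncomputable def pSgn (f : EuclideanSpace ℝ (Fin d) → ℝ) (p : EuclideanSpace ℝ (Fin d)) : ℝ :=
  if ‖p‖ < 1 + f (‖p‖⁻¹ • p) then 1 else -1

noncomputable def pBump (f : EuclideanSpace ℝ (Fin d) → ℝ) (r : ℝ)
    (p u : EuclideanSpace ℝ (Fin d)) : ℝ := max 0 (r - ‖pFun f u - p‖)

noncomputable def pT (f : EuclideanSpace ℝ (Fin d) → ℝ) (r : ℝ)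
    (u p : EuclideanSpace ℝ (Fin d)) : ℝ :=
  pSgn f p * (pBump f r p u - pBump f r p (-u))

lemma abs_pSgn (f : EuclideanSpace ℝ (Fin d) → ℝ) (p : EuclideanSpace ℝ (Fin d)) :
    |pSgn f p| = 1 := by
  unfold pSgn; split <;> simp

lemma pBump_nonneg (f : EuclideanSpace ℝ (Fin d) → ℝ) (r : ℝ) (p u : EuclideanSpace ℝ (Fin d)) :
    0 ≤ pBump f r p u := le_max_left _ _

lemma pBump_le (f : EuclideanSpace ℝ (Fin d) → ℝ) {r : ℝ} (hr : 0 ≤ r)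
    (p u : EuclideanSpace ℝ (Fin d)) : pBump f r p u ≤ r :=
  max_le hr (sub_le_self _ (norm_nonneg _))

lemma pBump_eq_zero (f : EuclideanSpace ℝ (Fin d) → ℝ) {r : ℝ} {p u : EuclideanSpace ℝ (Fin d)}
    (h : r ≤ ‖pFun f u - p‖) : pBump f r p u = 0 :=
  max_eq_left (by linarith)

lemma pBump_lip (f : EuclideanSpace ℝ (Fin d) → ℝ) (r : ℝ) (p u v : EuclideanSpace ℝ (Fin d)) :
    |pBump f r p u - pBump f r p v| ≤ ‖pFun f u - pFun f v‖ := by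
  unfold pBump
  rw [max_comm 0 (r - ‖pFun f u - p‖), max_comm 0 (r - ‖pFun f v - p‖)]
  refine (abs_max_sub_max_le_abs _ _ _).trans ?_
  have e : (r - ‖pFun f u - p‖) - (r - ‖pFun f v - p‖)
      = ‖pFun f v - p‖ - ‖pFun f u - p‖ := by ring
  rw [e, abs_sub_comm]
  have h2 : (pFun f u - p) - (pFun f v - p) = pFun f u - pFun f v := by abel
  calc |‖pFun f u - p‖ - ‖pFun f v - p‖| ≤ ‖(pFun f u - p) - (pFun f v - p)‖ :=
        abs_norm_sub_norm_le _ _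
    _ = ‖pFun f u - pFun f v‖ := by rw [h2]

lemma pT_zero (f : EuclideanSpace ℝ (Fin d) → ℝ) {r : ℝ} {u p : EuclideanSpace ℝ (Fin d)}
    (h1 : r ≤ ‖pFun f u - p‖) (h2 : r ≤ ‖pFun f (-u) - p‖) : pT f r u p = 0 := by
  unfold pT
  rw [pBump_eq_zero f h1, pBump_eq_zero f h2]; ring

lemma pT_abs_le (f : EuclideanSpace ℝ (Fin d) → ℝ) {r : ℝ} (hr : 0 ≤ r)
    (u p : EuclideanSpace ℝ (Fin d)) : |pT f r u p| ≤ r := by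
  unfold pT
  rw [abs_mul, abs_pSgn, one_mul]
  have h1 := pBump_nonneg f r p u
  have h2 := pBump_le f hr p u
  have h3 := pBump_nonneg f r p (-u)
  have h4 := pBump_le f hr p (-u)
  rw [abs_le]; constructor <;> linarith

lemma pT_diff_le (f : EuclideanSpace ℝ (Fin d) → ℝ) (r : ℝ)
    (u v p : EuclideanSpace ℝ (Fin d)) {L1 L2 : ℝ}
    (hF1 : ‖pFun f u - pFun f v‖ ≤ L1) (hF2 : ‖pFun f (-u) - pFun f (-v)‖ ≤ L2) :
    |pT f r u p - pT f r v p| ≤ L1 + L2 := by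
  unfold pT
  rw [← mul_sub, abs_mul, abs_pSgn, one_mul]
  have e : (pBump f r p u - pBump f r p (-u)) - (pBump f r p v - pBump f r p (-v))
      = (pBump f r p u - pBump f r p v) - (pBump f r p (-u) - pBump f r p (-v)) := by ring
  rw [e]
  have h1 := (pBump_lip f r p u v).trans hF1
  have h2 := (pBump_lip f r p (-u) (-v)).trans hF2
  calc |_ - _| ≤ |pBump f r p u - pBump f r p v| + |pBump f r p (-u) - pBump f r p (-v)| :=
        abs_sub _ _
    _ ≤ L1 + L2 := by linarith

lemma sum_abs_le_of_filter {α : Type*} (W : Finset α) (t : α → ℝ) (P : α → Prop)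
    [DecidablePred P] (h0 : ∀ p ∈ W, t p ≠ 0 → P p) {M : ℝ} (hM : ∀ p ∈ W, |t p| ≤ M)
    (hM0 : 0 ≤ M) {n : ℕ} (hn : (W.filter P).card ≤ n) : |∑ p ∈ W, t p| ≤ n * M := by
  calc |∑ p ∈ W, t p| = |∑ p ∈ W.filter P, t p| := by rw [Finset.sum_filter_of_ne h0]
    _ ≤ ∑ p ∈ W.filter P, |t p| := Finset.abs_sum_le_sum_abs _ _
    _ ≤ (W.filter P).card • M := Finset.sum_le_card_nsmul _ _ _
        (fun x hx => hM x (Finset.mem_filter.mp hx).1)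
    _ = ((W.filter P).card : ℝ) * M := nsmul_eq_mul _ _
    _ ≤ n * M := by
        have h : ((W.filter P).card : ℝ) ≤ (n : ℝ) := Nat.cast_le.mpr hn
        nlinarith

end PerturbAux

set_option maxHeartbeats 1000000 in
/-- Suppose `0 < a < 0.01`, `0 < r < 0.01/√d`, `V ⊆ [0,∞)^d` is finite, and
`f : S^{d-1} → (-0.1, 0.1)` is odd and `a`-Lipschitz with
`|B((1+f(u))·u, r) ∩ V| ≤ 1` for every unit vector `u`.  Then there exists
`g : S^{d-1} → ℝ` that is odd, `9a`-Lipschitz, and satisfies `|f(u) - g(u)| < a·r` and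
`B((1+g(u))·u, (a/2)·r) ∩ V = ∅` for all unit vectors `u`. -/
theorem perturb_avoiding_points (d : ℕ) (a r : ℝ)
    (ha0 : 0 < a) (ha : a < 0.01) (hr0 : 0 < r) (hr : r < 0.01 / Real.sqrt d)
    (V : Set (EuclideanSpace ℝ (Fin d))) (hVfin : V.Finite)
    (hVnonneg : ∀ p ∈ V, ∀ i, 0 ≤ p i)
    (f : EuclideanSpace ℝ (Fin d) → ℝ)
    (hfrange : ∀ u : EuclideanSpace ℝ (Fin d), ‖u‖ = 1 → f u ∈ Set.Ioo (-0.1 : ℝ) 0.1)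
    (hfodd : ∀ u : EuclideanSpace ℝ (Fin d), ‖u‖ = 1 → f u + f (-u) = 0)
    (hflip : ∀ u v : EuclideanSpace ℝ (Fin d), ‖u‖ = 1 → ‖v‖ = 1 →
      |f u - f v| ≤ a * ‖u - v‖)
    (hball : ∀ u : EuclideanSpace ℝ (Fin d), ‖u‖ = 1 →
      (Metric.ball ((1 + f u) • u) r ∩ V).ncard ≤ 1) :
    ∃ g : EuclideanSpace ℝ (Fin d) → ℝ,
      (∀ u : EuclideanSpace ℝ (Fin d), ‖u‖ = 1 → g u + g (-u) = 0) ∧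
      (∀ u v : EuclideanSpace ℝ (Fin d), ‖u‖ = 1 → ‖v‖ = 1 →
        |g u - g v| ≤ 9 * a * ‖u - v‖) ∧
      (∀ u : EuclideanSpace ℝ (Fin d), ‖u‖ = 1 → |f u - g u| < a * r) ∧
      (∀ u : EuclideanSpace ℝ (Fin d), ‖u‖ = 1 →
        Metric.ball ((1 + g u) • u) ((a / 2) * r) ∩ V = ∅) := by
  classical
  rcases Nat.eq_zero_or_pos d with hd0 | hdpos
  · exfalso
    subst hd0
    simp only [Nat.cast_zero, Real.sqrt_zero, div_zero] at hr
    linarith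
  have hd1 : (1:ℝ) ≤ Real.sqrt d := Real.one_le_sqrt.mpr (by exact_mod_cast hdpos)
  have hsdpos : (0:ℝ) < Real.sqrt d := by linarith
  have hr001 : r < 0.01 := hr.trans_le (div_le_self (by norm_num) hd1)
  have hrd : r * Real.sqrt d < 0.01 := (lt_div_iff₀ hsdpos).mp hr
  have hsq : Real.sqrt (d:ℝ) ^ 2 = (d:ℝ) := Real.sq_sqrt (by positivity)
  have hdr2 : (d:ℝ) * r ^ 2 < 0.0001 := by
    nlinarith [mul_nonneg hr0.le (Real.sqrt_nonneg (d:ℝ))]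
  have har : a * r < 0.0001 := by nlinarith
  set W : Finset (EuclideanSpace ℝ (Fin d)) := hVfin.toFinset with hWdef
  have hmemW : ∀ p, p ∈ W ↔ p ∈ V := fun p => hVfin.mem_toFinset
  set c : ℝ := 0.6 * a with hc
  have hcpos : 0 < c := by rw [hc]; linarith
  have hrange : ∀ u : EuclideanSpace ℝ (Fin d), ‖u‖ = 1 → 0.9 < 1 + f u ∧ 1 + f u < 1.1 := by
    intro u hu
    obtain ⟨h1, h2⟩ := hfrange u hu
    constructor <;> [linarith; linarith]
  have hFnorm : ∀ u : EuclideanSpace ℝ (Fin d), ‖u‖ = 1 → ‖pFun f u‖ = 1 + f u := by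
    intro u hu
    rw [pFun, norm_smul, hu, mul_one, Real.norm_eq_abs,
      abs_of_pos (by linarith [(hrange u hu).1])]
  have hcoord : ∀ (x : EuclideanSpace ℝ (Fin d)) (i : Fin d), |x i| ≤ ‖x‖ := by
    intro x i
    have h := abs_real_inner_le_norm (EuclideanSpace.single i (1:ℝ)) x
    rw [EuclideanSpace.inner_single_left] at h
    simp at h
    simpa using h
  -- no point can be near both the surface point over u and over -u
  have hL1 : ∀ u : EuclideanSpace ℝ (Fin d), ‖u‖ = 1 → ∀ p ∈ V, ∀ p' ∈ V,
      ‖pFun f u - p‖ < r → ‖pFun f (-u) - p'‖ < r → False := by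
    intro u hu p hp p' hp' h1 h2
    have hu' : ‖-u‖ = 1 := by rw [norm_neg]; exact hu
    have hfu := hrange u hu
    have hfu' := hrange (-u) hu'
    have key : ∀ i, |u i| ≤ 2 * r := by
      intro i
      have c1 := (hcoord (pFun f u - p) i).trans_lt h1
      have c2 := (hcoord (pFun f (-u) - p') i).trans_lt h2
      have e1 : (pFun f u - p) i = (1 + f u) * u i - p i := by
        simp [pFun, PiLp.sub_apply, PiLp.smul_apply, smul_eq_mul]
      have e2 : (pFun f (-u) - p') i = (1 + f (-u)) * (-(u i)) - p' i := by
        simp [pFun, PiLp.sub_apply, PiLp.smul_apply, PiLp.neg_apply, smul_eq_mul]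
      rw [e1] at c1; rw [e2] at c2
      have hpi := hVnonneg p hp i
      have hpi' := hVnonneg p' hp' i
      have b1 : -r ≤ (1 + f u) * u i := by
        have := (abs_lt.mp c1).1; linarith
      have b2 : -r ≤ (1 + f (-u)) * (-(u i)) := by
        have := (abs_lt.mp c2).1; linarith
      rw [abs_le]
      constructor
      · nlinarith
      · nlinarith
    have hsum : ∑ i, (u i) ^ 2 ≤ (d:ℝ) * (2 * r) ^ 2 := by
      calc ∑ i, (u i) ^ 2 ≤ ∑ _i : Fin d, (2 * r) ^ 2 := Finset.sum_le_sum (fun i _ => by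
            have hk := key i
            exact sq_le_sq' (by linarith [(abs_le.mp hk).1]) (abs_le.mp hk).2)
        _ = (d:ℝ) * (2 * r) ^ 2 := by
            rw [Finset.sum_const, Finset.card_univ, Fintype.card_fin, nsmul_eq_mul]
    have hnorm1 : ∑ i, (u i) ^ 2 = 1 := by
      have h4 : ‖u‖ ^ 2 = ∑ i, (u i) ^ 2 := by
        rw [← real_inner_self_eq_norm_sq, PiLp.inner_apply]
        simp [RCLike.inner_apply, conj_trivial, sq]
      rw [← h4, hu]; norm_num
    nlinarith [hdr2, hsum, hnorm1]
  -- at most one point of V in each surface ball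
  have hUniq : ∀ u : EuclideanSpace ℝ (Fin d), ‖u‖ = 1 → ∀ p ∈ V, ∀ p' ∈ V,
      ‖pFun f u - p‖ < r → ‖pFun f u - p'‖ < r → p = p' := by
    intro u hu p hp p' hp' h1 h2
    by_contra hne
    have hfin : (Metric.ball ((1 + f u) • u) r ∩ V).Finite := hVfin.inter_of_right _
    have hmem : ∀ x, ‖pFun f u - x‖ < r → x ∈ V →
        x ∈ Metric.ball ((1 + f u) • u) r ∩ V := by
      intro x hx hxV
      refine ⟨Metric.mem_ball.mpr ?_, hxV⟩
      rw [dist_eq_norm, norm_sub_rev]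
      exact hx
    have h2' : 1 < (Metric.ball ((1 + f u) • u) r ∩ V).ncard :=
      (Set.one_lt_ncard_iff hfin).mpr ⟨p, p', hmem p h1 hp, hmem p' h2 hp', hne⟩
    have := hball u hu
    omega
  -- at most one point active at u
  have hAct : ∀ u : EuclideanSpace ℝ (Fin d), ‖u‖ = 1 →
      (W.filter (fun p => ‖pFun f u - p‖ < r ∨ ‖pFun f (-u) - p‖ < r)).card ≤ 1 := by
    intro u hu
    have hu' : ‖-u‖ = 1 := by rw [norm_neg]; exact hu
    rw [Finset.card_le_one]
    intro p hp q hq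
    rw [Finset.mem_filter] at hp hq
    have hpV : p ∈ V := (hmemW p).mp hp.1
    have hqV : q ∈ V := (hmemW q).mp hq.1
    rcases hp.2 with h1 | h1 <;> rcases hq.2 with h2 | h2
    · exact hUniq u hu p hpV q hqV h1 h2
    · exact (hL1 u hu p hpV q hqV h1 h2).elim
    · exact (hL1 u hu q hqV p hpV h2 h1).elim
    · exact hUniq (-u) hu' p hpV q hqV h1 h2
  -- Lipschitz bound for the surface map
  have hFdiff : ∀ u v : EuclideanSpace ℝ (Fin d), ‖u‖ = 1 → ‖v‖ = 1 →
      ‖pFun f u - pFun f v‖ ≤ 2 * ‖u - v‖ := by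
    intro u v hu hv
    have hfu := hrange u hu
    have e : pFun f u - pFun f v = (1 + f u) • (u - v) + (f u - f v) • v := by
      unfold pFun; module
    rw [e]
    have h1 : ‖(1 + f u) • (u - v)‖ = |1 + f u| * ‖u - v‖ := by
      rw [norm_smul, Real.norm_eq_abs]
    have h2 : ‖(f u - f v) • v‖ = |f u - f v| * ‖v‖ := by
      rw [norm_smul, Real.norm_eq_abs]
    have h3 := hflip u v hu hv
    have h4 := norm_add_le ((1 + f u) • (u - v)) ((f u - f v) • v)
    rw [h1, h2, hv, mul_one] at h4
    have habs : |1 + f u| ≤ 1.1 := by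
      rw [abs_of_pos (by linarith [hfu.1])]; linarith [hfu.2]
    have hnn : (0:ℝ) ≤ ‖u - v‖ := norm_nonneg _
    nlinarith [abs_nonneg (f u - f v)]
  -- the perturbed function
  set g : EuclideanSpace ℝ (Fin d) → ℝ := fun u => f u + c * ∑ p ∈ W, pT f r u p with hgdef
  have hg : ∀ u, g u = f u + c * ∑ p ∈ W, pT f r u p := fun u => rfl
  -- closeness
  have hgf : ∀ u : EuclideanSpace ℝ (Fin d), ‖u‖ = 1 → |g u - f u| ≤ 0.6 * a * r := by
    intro u hu
    have e : g u - f u = c * ∑ p ∈ W, pT f r u p := by rw [hg u]; ring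
    rw [e, abs_mul, abs_of_pos hcpos]
    have hsum : |∑ p ∈ W, pT f r u p| ≤ ((1:ℕ):ℝ) * r := by
      apply sum_abs_le_of_filter W _ (fun p => ‖pFun f u - p‖ < r ∨ ‖pFun f (-u) - p‖ < r)
      · intro p _ hne
        by_contra hq
        push_neg at hq
        exact hne (pT_zero f hq.1 hq.2)
      · exact fun p _ => pT_abs_le f hr0.le u p
      · exact hr0.le
      · exact hAct u hu
    rw [hc]
    rw [Nat.cast_one, one_mul] at hsum
    nlinarith [hsum]
  refine ⟨g, ?_, ?_, ?_, ?_⟩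
  -- oddness
  · intro u hu
    have hzero : ∑ p ∈ W, pT f r u p + ∑ p ∈ W, pT f r (-u) p = 0 := by
      rw [← Finset.sum_add_distrib]
      apply Finset.sum_eq_zero
      intro p _
      unfold pT
      rw [neg_neg]
      ring
    have hfo := hfodd u hu
    rw [hg u, hg (-u)]
    linear_combination hfo + c * hzero
  -- Lipschitz
  · intro u v hu hv
    have hu' : ‖-u‖ = 1 := by rw [norm_neg]; exact hu
    have hv' : ‖-v‖ = 1 := by rw [norm_neg]; exact hv
    have hsplit : g u - g v = (f u - f v) + c * ∑ p ∈ W, (pT f r u p - pT f r v p) := by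
      rw [hg u, hg v, Finset.sum_sub_distrib]
      ring
    have hnegnorm : ‖(-u) - (-v)‖ = ‖u - v‖ := by rw [neg_sub_neg, norm_sub_rev]
    have hFd1 := hFdiff u v hu hv
    have hFd2 : ‖pFun f (-u) - pFun f (-v)‖ ≤ 2 * ‖u - v‖ := by
      have h := hFdiff (-u) (-v) hu' hv'
      rwa [hnegnorm] at h
    have hsum : |∑ p ∈ W, (pT f r u p - pT f r v p)| ≤ ((2:ℕ):ℝ) * (4 * ‖u - v‖) := by
      apply sum_abs_le_of_filter W _
        (fun p => (‖pFun f u - p‖ < r ∨ ‖pFun f (-u) - p‖ < r) ∨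
          (‖pFun f v - p‖ < r ∨ ‖pFun f (-v) - p‖ < r))
      · intro p _ hne
        by_contra hqn
        push_neg at hqn
        obtain ⟨⟨q1, q2⟩, q3, q4⟩ := hqn
        exact hne (by rw [pT_zero f q1 q2, pT_zero f q3 q4]; ring)
      · intro p _
        have h := pT_diff_le f r u v p hFd1 hFd2
        linarith
      · positivity
      · rw [Finset.filter_or]
        refine (Finset.card_union_le _ _).trans ?_
        have h1 := hAct u hu
        have h2 := hAct v hv
        omega
    push_cast at hsum
    have h5 : |(f u - f v) + c * ∑ p ∈ W, (pT f r u p - pT f r v p)|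
        ≤ |f u - f v| + c * |∑ p ∈ W, (pT f r u p - pT f r v p)| := by
      refine (abs_add_le _ _).trans ?_
      rw [abs_mul, abs_of_pos hcpos]
    have h6 : c * |∑ p ∈ W, (pT f r u p - pT f r v p)| ≤ c * (2 * (4 * ‖u - v‖)) :=
      mul_le_mul_of_nonneg_left hsum hcpos.le
    have h3 := hflip u v hu hv
    rw [hsplit]
    rw [hc] at h6
    nlinarith [norm_nonneg (u - v), h5, h6, h3, abs_nonneg (∑ p ∈ W, (pT f r u p - pT f r v p))]
  -- closeness
  · intro u hu
    have h1 := hgf u hu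
    rw [abs_sub_comm]
    have h2 : 0.6 * a * r < a * r := by nlinarith
    linarith
  -- avoidance
  · intro u hu
    have hu' : ‖-u‖ = 1 := by rw [norm_neg]; exact hu
    rw [Set.eq_empty_iff_forall_notMem]
    rintro q ⟨hqb, hqV⟩
    rw [Metric.mem_ball, dist_eq_norm] at hqb
    have hfu := hrange u hu
    have hgu := hgf u hu
    have hX : 0 < a * r := mul_pos ha0 hr0
    have hd1 : ‖pFun f u - q‖ < 1.1 * (a * r) := by
      have htri := dist_triangle (pFun f u) ((1 + g u) • u) q
      rw [dist_eq_norm, dist_eq_norm, dist_eq_norm] at htri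
      have hFG : ‖pFun f u - (1 + g u) • u‖ = |g u - f u| := by
        have e : pFun f u - (1 + g u) • u = (f u - g u) • u := by unfold pFun; module
        rw [e, norm_smul, Real.norm_eq_abs, hu, mul_one, abs_sub_comm]
      rw [hFG] at htri
      have h2 : ‖(1 + g u) • u - q‖ < a / 2 * r := by rw [norm_sub_rev]; exact hqb
      linarith
    have hd1r : ‖pFun f u - q‖ < r := by
      linarith only [hd1, mul_lt_mul_of_pos_right ha hr0, hr0]
    have hqW : q ∈ W := (hmemW q).mpr hqV
    have hnoanti : ∀ p ∈ V, r ≤ ‖pFun f (-u) - p‖ := by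
      intro p hp
      by_contra hlt
      exact hL1 u hu q hqV p hp hd1r (not_le.mp hlt)
    have honly : ∀ p ∈ V, p ≠ q → r ≤ ‖pFun f u - p‖ := by
      intro p hp hne
      by_contra hlt
      exact hne (hUniq u hu p hp q hqV (not_le.mp hlt) hd1r)
    have hsum : ∑ p ∈ W, pT f r u p = pSgn f q * (r - ‖pFun f u - q‖) := by
      rw [Finset.sum_eq_single_of_mem q hqW]
      · unfold pT
        rw [pBump_eq_zero f (hnoanti q hqV), sub_zero]
        unfold pBump
        rw [max_eq_right (by linarith)]
      · intro p hpW hpq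
        exact pT_zero f (honly p ((hmemW p).mp hpW) hpq) (hnoanti p ((hmemW p).mp hpW))
    have hgu_eq : g u = f u + c * (pSgn f q * (r - ‖pFun f u - q‖)) := by rw [hg u, hsum]
    have hq0 : q ≠ 0 := by
      intro h0
      rw [h0, sub_zero, hFnorm u hu] at hd1r
      linarith [hfu.1]
    have hρl : 0.8 ≤ ‖q‖ := by
      have h := norm_sub_norm_le (pFun f u) q
      rw [hFnorm u hu] at h
      linarith [hfu.1]
    have hρu : ‖q‖ ≤ 1.2 := by
      have h := norm_sub_norm_le q (pFun f u)
      rw [hFnorm u hu, norm_sub_rev] at h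
      linarith [hfu.2]
    set v := ‖q‖⁻¹ • q with hv
    have hvn : ‖v‖ = 1 := by
      rw [hv, norm_smul, norm_inv, norm_norm, inv_mul_cancel₀ (norm_ne_zero_iff.mpr hq0)]
    have hqv : ‖q‖ • v = q := by
      rw [hv, smul_smul, mul_inv_cancel₀ (norm_ne_zero_iff.mpr hq0), one_smul]
    have huv : ‖u - v‖ ≤ 3 * (a * r) := by
      have e : ‖q‖ • (u - v) = ‖q‖ • u - q := by rw [smul_sub, hqv]
      have h2 : ‖‖q‖ • (u - v)‖ = ‖q‖ * ‖u - v‖ := by rw [norm_smul, norm_norm]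
      have h1 : ‖‖q‖ • u - q‖ ≤ 2 * ‖pFun f u - q‖ := by
        have htri := dist_triangle (‖q‖ • u) (pFun f u) q
        rw [dist_eq_norm, dist_eq_norm, dist_eq_norm] at htri
        have h3 : ‖‖q‖ • u - pFun f u‖ ≤ ‖pFun f u - q‖ := by
          have e2 : ‖q‖ • u - pFun f u = (‖q‖ - (1 + f u)) • u := by unfold pFun; module
          rw [e2, norm_smul, Real.norm_eq_abs, hu, mul_one]
          have h4 := abs_norm_sub_norm_le q (pFun f u)
          rw [hFnorm u hu, norm_sub_rev] at h4
          exact h4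
        linarith
      have h5 : ‖q‖ * ‖u - v‖ ≤ 2 * ‖pFun f u - q‖ := by rw [← h2, e]; exact h1
      linarith only [norm_nonneg (u - v), hd1, h5,
        mul_nonneg (sub_nonneg.mpr hρl) (norm_nonneg (u - v)), hX]
    have hfv := hfrange v hvn
    have hfuv := hflip u v hu hvn
    have hinner : ⟪(1 + g u) • u - q, u⟫ = 1 + g u - ⟪q, u⟫ := by
      rw [inner_sub_left, real_inner_smul_left, real_inner_self_eq_norm_sq, hu]
      norm_num
    have habs : |⟪(1 + g u) • u - q, u⟫| ≤ ‖(1 + g u) • u - q‖ := by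
      have h := abs_real_inner_le_norm ((1 + g u) • u - q) u
      rwa [hu, mul_one] at h
    have hnlt : ‖(1 + g u) • u - q‖ < a / 2 * r := by rw [norm_sub_rev]; exact hqb
    have hqu_le : ⟪q, u⟫ ≤ ‖q‖ := by
      have h := real_inner_le_norm q u
      rwa [hu, mul_one] at h
    have hvu2 : ‖u - v‖ ^ 2 = 2 - 2 * ⟪v, u⟫ := by
      rw [norm_sub_sq_real, hu, hvn, real_inner_comm]
      ring
    have hqu_eq : ⟪q, u⟫ = ‖q‖ * ⟪v, u⟫ := by
      conv_lhs => rw [← hqv]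
      rw [real_inner_smul_left]
    rw [hinner] at habs
    have e5 : a * (a * r) ≤ 0.01 * (a * r) := (mul_lt_mul_of_pos_right ha hX).le
    have e3 : 0.6 * a * r - 0.66 * (a * (a * r)) ≤ 0.6 * a * (r - ‖pFun f u - q‖) := by
      have h := mul_le_mul_of_nonneg_left hd1.le ha0.le
      linarith only [h]
    by_cases hcase : ‖q‖ < 1 + f (‖q‖⁻¹ • q)
    · have hσ : pSgn f q = 1 := if_pos hcase
      rw [← hv] at hcase
      rw [hσ] at hgu_eq
      have h5 := (abs_le.mp hfuv).1
      have h6 : a * ‖u - v‖ ≤ a * (3 * (a * r)) := mul_le_mul_of_nonneg_left huv ha0.le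
      have ht : -(3 * (a * (a * r))) ≤ 1 + f u - ⟪q, u⟫ := by
        linarith only [hqu_le, hcase, h5, h6]
      have hval : 1 + g u - ⟪q, u⟫ > a / 2 * r := by
        rw [hgu_eq, hc]
        linarith only [ht, e3, e5, hX]
      have h7 := le_abs_self (1 + g u - ⟪q, u⟫)
      exact absurd (lt_of_le_of_lt (h7.trans habs) hnlt) (not_lt.mpr hval.le)
    · have hσ : pSgn f q = -1 := if_neg hcase
      rw [← hv] at hcase
      push_neg at hcase
      rw [hσ] at hgu_eq
      have h5 := (abs_le.mp hfuv).2
      have h6 : a * ‖u - v‖ ≤ a * (3 * (a * r)) := mul_le_mul_of_nonneg_left huv ha0.le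
      have e4 : (3 * (a * r)) ^ 2 ≤ 0.0009 * (a * r) := by nlinarith only [har, hX]
      have h7 : ‖q‖ * (2 - 2 * ⟪v, u⟫) ≤ 1.2 * (3 * (a * r)) ^ 2 := by
        rw [← hvu2]
        have s1 : ‖u - v‖ ^ 2 ≤ (3 * (a * r)) ^ 2 := by
          nlinarith only [huv, norm_nonneg (u - v)]
        nlinarith only [s1, hρu, sq_nonneg (‖u - v‖), norm_nonneg (u - v)]
      have ht : 1 + f u - ⟪q, u⟫ ≤ 3 * (a * (a * r)) + 0.6 * (3 * (a * r)) ^ 2 := by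
        linarith only [hqu_eq, hcase, h5, h6, h7]
      have hval : 1 + g u - ⟪q, u⟫ < -(a / 2 * r) := by
        rw [hgu_eq, hc]
        linarith only [ht, e3, e4, e5, hX]
      have h8 := neg_abs_le (1 + g u - ⟪q, u⟫)
      have h9 : -‖(1 + g u) • u - q‖ ≤ 1 + g u - ⟪q, u⟫ :=
        (neg_le_neg habs).trans h8
      have h10 : -‖(1 + g u) • u - q‖ < -(a / 2 * r) := h9.trans_lt hval
      have h11 : a / 2 * r < ‖(1 + g u) • u - q‖ := by
        have h12 := neg_lt_neg h10
        rwa [neg_neg, neg_neg] at h12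
      exact lt_asymm h11 hnlt
end

section
/- Let X₁, X₂, ... be a sequence of nonnegative-integer-valued random variables and μ > 0. If for every m ∈ ℕ the m-th factorial moment converges, E[(X_n)(X_n-1)···(X_n-m+1)] → μ^m as n → ∞, then X_n converges in distribution to a Poisson random variable with mean μ. -/
/-!
Let `bₖ,ᵣ(x) = ∑_{j ≤ r} (-1)ʲ C(k+j, k) C(x, k+j) = C(x, k) ∑_{j ≤ r} (-1)ʲ C(x-k, j)`.
The alternating partial sums of binomial coefficients give the Bonferroni inequalities
`bₖ,₂ᵣ₊₁(x) ≤ 𝟙{x = k} ≤ bₖ,₂ᵣ(x)`. Since `C(k+j, k) C(x, k+j) = (x)ₖ₊ⱼ / (k! j!)`, the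
expectation of `bₖ,ᵣ(Xₙ)` is a finite combination of factorial moments, so it tends to the
`r`-th partial sum of `∑ⱼ (-1)ʲ μᵏ⁺ʲ / (k! j!) = e^{-μ} μᵏ / k!`. Letting `n → ∞` and then
`r → ∞` squeezes `P(Xₙ = k)` between odd and even partial sums of this series.
-/

open Filter MeasureTheory ProbabilityTheory Finset
open scoped Nat Topology

/-- Applied to the factorial moments `y m = (x)ₘ` of the point mass at `x`, this is the
`r`-th Bonferroni partial sum for `𝟙{x = k}`; applied to `y m = μ ^ m`, a partial sum of the
Poisson series for `e^{-μ} μᵏ / k!`. -/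
noncomputable def bonferroniSum (k r : ℕ) (y : ℕ → ℝ) : ℝ :=
  ∑ j ∈ range (r + 1), (-1) ^ j / (k ! * j !) * y (k + j)

lemma prod_range_sub_eq_descFactorial (x m : ℕ) :
    ∏ j ∈ range m, ((x : ℝ) - j) = x.descFactorial m := by
  rw [← descPochhammer_eval_eq_prod_range, descPochhammer_eval_eq_descFactorial]

lemma bonferroniSum_descFactorial (k r x : ℕ) :
    bonferroniSum k r (fun m => x.descFactorial m)
      = x.choose k * ∑ j ∈ range (r + 1), (-1) ^ j * ((x - k).choose j : ℝ) := by
  rw [bonferroniSum, mul_sum]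
  refine sum_congr rfl fun j _ => ?_
  have hsplit : x.descFactorial (k + j) = (j ! * (x - k).choose j) * (k ! * x.choose k) := by
    rw [← Nat.descFactorial_mul_descFactorial (Nat.le_add_right k j), Nat.add_sub_cancel_left,
      Nat.descFactorial_eq_factorial_mul_choose, Nat.descFactorial_eq_factorial_mul_choose]
  rw [hsplit]
  push_cast
  field_simp

lemma bonferroniSum_descFactorial_self (k r : ℕ) :
    bonferroniSum k r (fun m => k.descFactorial m) = 1 := by
  simp [bonferroniSum_descFactorial, sum_range_succ']

lemma neg_one_pow_mul_bonferroniSum_descFactorial_nonneg {k x : ℕ} (r : ℕ) (hx : x ≠ k) :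
    0 ≤ (-1) ^ r * bonferroniSum k r (fun m => x.descFactorial m) := by
  rw [bonferroniSum_descFactorial]
  rcases lt_or_gt_of_ne hx with hlt | hgt
  · simp [Nat.choose_eq_zero_of_lt hlt]
  · obtain ⟨d, hd⟩ : ∃ d, x - k = d + 1 := ⟨x - k - 1, by omega⟩
    have halt : ∑ j ∈ range (r + 1), (-1) ^ j * ((d + 1).choose j : ℝ)
        = (-1) ^ r * d.choose r := by
      exact_mod_cast Int.alternating_sum_range_choose_eq_choose
    have hsign : ((-1 : ℝ) ^ r) * (-1) ^ r = 1 := by rw [← pow_add, Even.neg_one_pow ⟨r, rfl⟩]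
    have hcancel : (-1) ^ r * ((x.choose k : ℝ) * ((-1) ^ r * d.choose r))
        = x.choose k * d.choose r := by
      linear_combination (x.choose k * d.choose r : ℝ) * hsign
    rw [hd, halt, hcancel]
    positivity

lemma indicator_le_bonferroniSum_descFactorial_even (k r x : ℕ) :
    (if x = k then 1 else 0) ≤ bonferroniSum k (2 * r) (fun m => x.descFactorial m) := by
  split_ifs with hx
  · rw [hx, bonferroniSum_descFactorial_self]
  · simpa [pow_mul] using neg_one_pow_mul_bonferroniSum_descFactorial_nonneg (2 * r) hx

lemma bonferroniSum_descFactorial_odd_le_indicator (k r x : ℕ) :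
    bonferroniSum k (2 * r + 1) (fun m => x.descFactorial m) ≤ if x = k then 1 else 0 := by
  split_ifs with hx
  · rw [hx, bonferroniSum_descFactorial_self]
  · simpa [pow_succ, pow_mul] using
      neg_one_pow_mul_bonferroniSum_descFactorial_nonneg (2 * r + 1) hx

lemma tendsto_bonferroniSum_pow (k : ℕ) (x : ℝ) :
    Tendsto (fun r => bonferroniSum k r (x ^ ·)) atTop (𝓝 (Real.exp (-x) * x ^ k / k !)) := by
  have hterm : ∀ j, x ^ k / k ! * ((-x) ^ j / j !) = (-1) ^ j / (k ! * j !) * x ^ (k + j) := by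
    intro j
    rw [neg_pow, pow_add]
    field_simp
  have hsum : HasSum (fun j => (-1) ^ j / (k ! * j !) * x ^ (k + j))
      (Real.exp (-x) * x ^ k / k !) := by
    have h := (NormedSpace.expSeries_div_hasSum_exp (-x)).mul_left (x ^ k / k !)
    rw [← Real.exp_eq_exp_ℝ] at h
    simp only [hterm] at h
    rwa [mul_comm, ← mul_div_assoc] at h
  exact hsum.tendsto_sum_nat.comp (tendsto_add_atTop_nat 1)

lemma tendsto_of_lower_upper_approximations {ι κ α : Type*} [TopologicalSpace α]
    [LinearOrder α] [OrderTopology α] {l : Filter ι} {l' : Filter κ} [l'.NeBot] {f : ι → α} {L : α}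
    {lower upper : κ → ι → α} {lowerLim upperLim : κ → α}
    (hlower : ∀ r, Tendsto (lower r) l (𝓝 (lowerLim r)))
    (hupper : ∀ r, Tendsto (upper r) l (𝓝 (upperLim r)))
    (hlowerLim : Tendsto lowerLim l' (𝓝 L)) (hupperLim : Tendsto upperLim l' (𝓝 L))
    (hle : ∀ r, ∀ᶠ i in l, lower r i ≤ f i) (hge : ∀ r, ∀ᶠ i in l, f i ≤ upper r i) :
    Tendsto f l (𝓝 L) := by
  refine tendsto_order.2 ⟨fun a ha => ?_, fun a ha => ?_⟩
  · obtain ⟨r, hr⟩ := (hlowerLim.eventually (lt_mem_nhds ha)).exists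
    filter_upwards [(hlower r).eventually (lt_mem_nhds hr), hle r] with i h1 h2
    exact h1.trans_le h2
  · obtain ⟨r, hr⟩ := (hupperLim.eventually (gt_mem_nhds ha)).exists
    filter_upwards [(hupper r).eventually (gt_mem_nhds hr), hge r] with i h1 h2
    exact h2.trans_lt h1

section Integration

variable {Ω : Type*} [MeasurableSpace Ω] {P : Measure Ω}

lemma eventually_integrable_of_tendsto_integral {ι E : Type*} [NormedAddCommGroup E]
    [NormedSpace ℝ E] {l : Filter ι} {f : ι → Ω → E} {c : E}
    (h : Tendsto (fun i => ∫ ω, f i ω ∂P) l (𝓝 c)) (hc : c ≠ 0) :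
    ∀ᶠ i in l, Integrable (f i) P := by
  filter_upwards [h.eventually_ne hc] with i hi
  by_contra hni
  exact hi (integral_undef hni)

lemma integrable_bonferroniSum {Y : Ω → ℕ → ℝ} {k r : ℕ}
    (hY : ∀ j ∈ range (r + 1), Integrable (fun ω => Y ω (k + j)) P) :
    Integrable (fun ω => bonferroniSum k r (Y ω)) P :=
  integrable_finsetSum _ fun j hj => (hY j hj).const_mul _

lemma integral_bonferroniSum {Y : Ω → ℕ → ℝ} {k r : ℕ}
    (hY : ∀ j ∈ range (r + 1), Integrable (fun ω => Y ω (k + j)) P) :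
    ∫ ω, bonferroniSum k r (Y ω) ∂P = bonferroniSum k r (fun m => ∫ ω, Y ω m ∂P) := by
  simp only [bonferroniSum]
  rw [integral_finsetSum _ fun j hj => (hY j hj).const_mul _]
  exact sum_congr rfl fun j _ => integral_const_mul _ _

variable {ι : Type*} {l : Filter ι} {Y : ι → Ω → ℕ → ℝ}

lemma eventually_integrable_bonferroniSum
    (hY : ∀ m, ∀ᶠ i in l, Integrable (fun ω => Y i ω m) P) (k r : ℕ) :
    ∀ᶠ i in l, Integrable (fun ω => bonferroniSum k r (Y i ω)) P := by
  filter_upwards [(eventually_all_finset (range (r + 1))).2 fun j _ => hY (k + j)] with i hi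
  exact integrable_bonferroniSum hi

lemma tendsto_integral_bonferroniSum {y : ℕ → ℝ}
    (hlim : ∀ m, Tendsto (fun i => ∫ ω, Y i ω m ∂P) l (𝓝 (y m)))
    (hY : ∀ m, ∀ᶠ i in l, Integrable (fun ω => Y i ω m) P) (k r : ℕ) :
    Tendsto (fun i => ∫ ω, bonferroniSum k r (Y i ω) ∂P) l (𝓝 (bonferroniSum k r y)) := by
  have hcomb : Tendsto (fun i => bonferroniSum k r (fun m => ∫ ω, Y i ω m ∂P)) l
      (𝓝 (bonferroniSum k r y)) :=
    tendsto_finsetSum _ fun j _ => (hlim (k + j)).const_mul _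
  refine hcomb.congr' ?_
  filter_upwards [(eventually_all_finset (range (r + 1))).2 fun j _ => hY (k + j)] with i hi
  exact (integral_bonferroniSum hi).symm

end Integration

section Bonferroni

variable {Ω : Type*} [MeasurableSpace Ω] {P : Measure Ω} [IsFiniteMeasure P] {X : Ω → ℕ}

lemma measureReal_eq_le_integral_bonferroniSum_even (hX : Measurable X) (k r : ℕ)
    (hint : Integrable (fun ω => bonferroniSum k (2 * r) (fun m => (X ω).descFactorial m)) P) :
    P.real {ω | X ω = k} ≤ ∫ ω, bonferroniSum k (2 * r) (fun m => (X ω).descFactorial m) ∂P := by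
  have hmeas : MeasurableSet {ω | X ω = k} := hX (measurableSet_singleton k)
  rw [← integral_indicator_one hmeas]
  refine integral_mono ((integrable_const 1).indicator hmeas) hint fun ω => ?_
  simpa [Set.indicator_apply] using indicator_le_bonferroniSum_descFactorial_even k r (X ω)

lemma integral_bonferroniSum_odd_le_measureReal_eq (hX : Measurable X) (k r : ℕ)
    (hint : Integrable
      (fun ω => bonferroniSum k (2 * r + 1) (fun m => (X ω).descFactorial m)) P) :
    ∫ ω, bonferroniSum k (2 * r + 1) (fun m => (X ω).descFactorial m) ∂P
      ≤ P.real {ω | X ω = k} := by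
  have hmeas : MeasurableSet {ω | X ω = k} := hX (measurableSet_singleton k)
  rw [← integral_indicator_one hmeas]
  refine integral_mono hint ((integrable_const 1).indicator hmeas) fun ω => ?_
  simpa [Set.indicator_apply] using bonferroniSum_descFactorial_odd_le_indicator k r (X ω)

end Bonferroni

/-- Method of moments for the Poisson distribution: if `X₁, X₂, …` are `ℕ`-valued random
variables whose `m`-th factorial moments `E[(Xₙ)ₘ] = E[Xₙ(Xₙ-1)⋯(Xₙ-m+1)]` converge to
`μ^m` for every `m`, then `Xₙ` converges in distribution to `Poisson(μ)`; for `ℕ`-valued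
random variables this is equivalent to pointwise convergence of the probability mass
functions `P(Xₙ = k) → e^{-μ} μ^k / k!`. -/
theorem factorial_moments_tendsto_poisson {Ω : Type*} [MeasurableSpace Ω]
    (P : Measure Ω) [IsProbabilityMeasure P]
    (X : ℕ → Ω → ℕ) (hX : ∀ n, Measurable (X n))
    (μ : NNReal) (hμ : 0 < μ)
    (hmom : ∀ m : ℕ, Tendsto
      (fun n => ∫ ω, (∏ j ∈ Finset.range m, ((X n ω : ℝ) - (j : ℝ))) ∂P)
      atTop (nhds ((μ : ℝ) ^ m))) :
    ∀ k : ℕ, Tendsto (fun n => (P {ω | X n ω = k}).toReal) atTop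
      (nhds (poissonPMFReal μ k)) := by
  intro k
  have hfact : ∀ m, Tendsto (fun n => ∫ ω, ((X n ω).descFactorial m : ℝ) ∂P) atTop
      (𝓝 ((μ : ℝ) ^ m)) := by
    simpa only [prod_range_sub_eq_descFactorial] using hmom
  -- `μ > 0` rules out factorial moments that are `0` only because they are not integrable.
  have hint : ∀ m, ∀ᶠ n in atTop, Integrable (fun ω => ((X n ω).descFactorial m : ℝ)) P :=
    fun m => eventually_integrable_of_tendsto_integral (hfact m) (pow_ne_zero m (by positivity))
  have hE := tendsto_integral_bonferroniSum hfact hint k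
  have hpois : Tendsto (fun r => bonferroniSum k r ((μ : ℝ) ^ ·)) atTop
      (𝓝 (poissonPMFReal μ k)) := tendsto_bonferroniSum_pow k μ
  refine tendsto_of_lower_upper_approximations (fun r => hE (2 * r + 1)) (fun r => hE (2 * r))
    (hpois.comp (tendsto_atTop_mono (fun r => show r ≤ 2 * r + 1 by omega) tendsto_id))
    (hpois.comp (tendsto_atTop_mono (fun r => show r ≤ 2 * r by omega) tendsto_id))
    (fun r => ?_) (fun r => ?_)
  · filter_upwards [eventually_integrable_bonferroniSum hint k (2 * r + 1)] with n hn
    exact integral_bonferroniSum_odd_le_measureReal_eq (hX n) k r hn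
  · filter_upwards [eventually_integrable_bonferroniSum hint k (2 * r)] with n hn
    exact measureReal_eq_le_integral_bonferroniSum_even (hX n) k r hn
end
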